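/- Let q = 7^a, let K be an algebraic closure of ℚ_7 with valuation ord_7 normalized by ord_7(7) = 1, and ord_q := (1/a)·ord_7. Let α_1, α_2, α_3, α_4 ∈ K be nonzero and set P(T) = ∏_{i=1}^4 (1 − α_i T) = 1 + b_1 T + b_2 T^2 + b_3 T^3 + b_4 T^4. Assume: (i) the multiset {α_1, α_2, α_3, α_4} is stable under α ↦ q/α (so the Newton polygon of P with respect to ord_q is symmetric about slope 1/2); (ii) every vertex of the Newton polygon of P (the lower convex hull of the points (n, ord_q b_n), 0 ≤ n ≤ 4, with b_0 = 1) has ordinate an integer multiple of 1/6; (iii) ord_q(b_1) > 5/12 and ord_q(b_2) > 5/6. Then ord_q(α_i) = 1/2 for all i = 1, 2, 3, 4. -/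

import Mathlib

/-!
Let `s₀ ≤ s₁ ≤ s₂ ≤ s₃` be the valuations of the `αᵢ`. Since `α ↦ q/α` permutes the `αᵢ` and
`ord_q q = 1`, the slopes are symmetric about `1/2`: `s₀ + s₃ = s₁ + s₂ = 1`, so it suffices to
show `s₀ = 1/2`. The Newton polygon of `P` lies above the polygon with slopes `sᵢ`, and the two
touch at `n` whenever `s_{n-1} < s_n`, making `(n, s₀ + ⋯ + s_{n-1})` a vertex. If `s₀ < 1/2`,
then either `s₀ < s₁`, giving the vertex `(1, s₀)` with `5/12 < s₀ < 1/2`, or `s₀ = s₁ < s₂`,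
giving the vertex `(2, 2s₀)` with `5/6 < 2s₀ < 1` (`s₀ = s₁ = s₂` contradicts `s₁ + s₂ = 1`).
Neither ordinate is a multiple of `1/6`.
-/

open scoped BigOperators

local instance fact7 : Fact (Nat.Prime 7) := ⟨by norm_num⟩

/-- Value at `x` of the lower convex hull (Newton polygon) of the points
`(n, pts n)`, `0 ≤ n ≤ d`, where `pts n ∈ ℝ ∪ {+∞}`. -/
noncomputable def npVal (d : ℕ) (pts : ℕ → WithTop ℝ) (x : ℝ) : ℝ :=
  sSup {y : ℝ | ∃ m c : ℝ,
    (∀ n ∈ Finset.range (d + 1), ((m * n + c : ℝ) : WithTop ℝ) ≤ pts n) ∧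
    y = m * x + c}

/-- `(n, npVal d pts n)` is a vertex of the Newton polygon of the points
`(k, pts k)`, `0 ≤ k ≤ d`. -/
def IsNPVertex (d : ℕ) (pts : ℕ → WithTop ℝ) (n : ℕ) : Prop :=
  n ≤ d ∧ ∃ m c : ℝ,
    (∀ k ∈ Finset.range (d + 1), ((m * k + c : ℝ) : WithTop ℝ) ≤ pts k) ∧
    (m * n + c : ℝ) = npVal d pts n ∧
    ∀ k ≤ d, k ≠ n → (m * k + c : ℝ) < npVal d pts k

open Polynomial

section NewtonPolygon

variable {d n : ℕ} {pts : ℕ → WithTop ℝ}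

theorem le_npVal {p₀ p_d m c x : ℝ} (h0 : pts 0 = p₀) (hd : pts d = p_d)
    (hline : ∀ k ∈ Finset.range (d + 1), ((m * k + c : ℝ) : WithTop ℝ) ≤ pts k)
    (hx₀ : 0 ≤ x) (hx_d : x ≤ d) : m * x + c ≤ npVal d pts x := by
  refine le_csSup ⟨max p₀ p_d, ?_⟩ ⟨m, c, hline, rfl⟩
  -- a line below the points is bounded on `[0, d]` by its values at the two ends
  rintro _ ⟨m', c', hline', rfl⟩
  have hc : m' * (0 : ℕ) + c' ≤ p₀ := WithTop.coe_le_coe.1 (h0 ▸ hline' 0 (by simp))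
  have hdc : m' * d + c' ≤ p_d := WithTop.coe_le_coe.1 (hd ▸ hline' d (by simp))
  calc m' * x + c' ≤ max c' (m' * d + c') := by
        rcases le_total 0 m' with h | h
        · exact le_max_of_le_right (by nlinarith)
        · exact le_max_of_le_left (by nlinarith)
    _ ≤ max p₀ p_d := max_le_max (by simpa using hc) hdc

theorem npVal_le {P : ℝ} (hn : n ≤ d) (hP : pts n = P)
    (hne : ∃ m c : ℝ, ∀ k ∈ Finset.range (d + 1), ((m * k + c : ℝ) : WithTop ℝ) ≤ pts k) :
    npVal d pts n ≤ P := by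
  obtain ⟨m, c, hline⟩ := hne
  refine csSup_le ⟨_, m, c, hline, rfl⟩ ?_
  rintro _ ⟨m', c', hline', rfl⟩
  exact WithTop.coe_le_coe.1 (hP ▸ hline' n (Finset.mem_range.2 (by omega)))

theorem isNPVertex_of_supporting_slopes {p₀ p_d P m₁ m₂ : ℝ} (h0 : pts 0 = p₀)
    (hd : pts d = p_d) (hn : n ≤ d) (hP : pts n = P) (hm : m₁ < m₂)
    (h₁ : ∀ k ≤ d, ((m₁ * (k - n) + P : ℝ) : WithTop ℝ) ≤ pts k)
    (h₂ : ∀ k ≤ d, ((m₂ * (k - n) + P : ℝ) : WithTop ℝ) ≤ pts k) :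
    IsNPVertex d pts n ∧ npVal d pts n = P := by
  set m₀ := (m₁ + m₂) / 2 with hm₀
  -- the supporting line of the mean slope `m₀` touches the polygon only at `n`
  have hbisect : ∀ k : ℕ, m₀ * (k - n) ≤ max (m₁ * (k - n)) (m₂ * (k - n)) ∧
      (k ≠ n → m₀ * (k - n) < max (m₁ * (k - n)) (m₂ * (k - n))) := by
    intro k
    rcases lt_trichotomy (k : ℝ) n with h | h | h
    · have : m₀ * (k - n) < m₁ * (k - n) := by nlinarith [mul_pos (sub_pos.2 hm) (sub_pos.2 h)]
      exact ⟨le_max_of_le_left this.le, fun _ => lt_max_of_lt_left this⟩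
    · exact ⟨by simp [h], fun hk => absurd (by exact_mod_cast h) hk⟩
    · have : m₀ * (k - n) < m₂ * (k - n) := by nlinarith [mul_pos (sub_pos.2 hm) (sub_pos.2 h)]
      exact ⟨le_max_of_le_right this.le, fun _ => lt_max_of_lt_right this⟩
  have hline : ∀ m, (∀ k ≤ d, ((m * (k - n) + P : ℝ) : WithTop ℝ) ≤ pts k) →
      ∀ k ∈ Finset.range (d + 1), ((m * k + (P - m * n) : ℝ) : WithTop ℝ) ≤ pts k := by
    intro m h k hk
    convert h k (Nat.lt_succ_iff.mp (Finset.mem_range.mp hk)) using 2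
    ring
  have h₀ : ∀ k ≤ d, ((m₀ * (k - n) + P : ℝ) : WithTop ℝ) ≤ pts k := by
    intro k hk
    calc ((m₀ * (k - n) + P : ℝ) : WithTop ℝ)
        ≤ ((max (m₁ * (k - n)) (m₂ * (k - n)) + P : ℝ) : WithTop ℝ) := by
          exact WithTop.coe_le_coe.mpr (by linarith [(hbisect k).1])
      _ ≤ pts k := by
          rw [← max_add_add_right, WithTop.coe_max]
          exact max_le (h₁ k hk) (h₂ k hk)
  have hval : npVal d pts n = P := by
    refine le_antisymm (npVal_le hn hP ⟨m₁, _, hline m₁ h₁⟩) ?_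
    simpa using le_npVal h0 hd (hline m₁ h₁) n.cast_nonneg (Nat.cast_le.mpr hn)
  refine ⟨⟨hn, m₀, P - m₀ * n, hline m₀ h₀, by rw [hval]; ring, fun k hk hkn => ?_⟩, hval⟩
  have hk₀ : (0 : ℝ) ≤ k := k.cast_nonneg
  have hk_d : (k : ℝ) ≤ d := Nat.cast_le.mpr hk
  calc m₀ * k + (P - m₀ * n) = m₀ * (k - n) + P := by ring
    _ < max (m₁ * (k - n)) (m₂ * (k - n)) + P := by linarith [(hbisect k).2 hkn]
    _ ≤ npVal d pts k := by
      rw [← max_add_add_right]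
      refine max_le ?_ ?_
      · linarith [le_npVal h0 hd (hline m₁ h₁) hk₀ hk_d]
      · linarith [le_npVal h0 hd (hline m₂ h₂) hk₀ hk_d]

end NewtonPolygon

theorem prod_one_sub_C_mul_X_fin_four {R : Type*} [CommRing R] (α : Fin 4 → R) :
    ∏ i, (1 - C (α i) * X) = 1 - C (α 0 + α 1 + α 2 + α 3) * X
      + C (α 0 * α 1 + α 0 * α 2 + α 0 * α 3 + α 1 * α 2 + α 1 * α 3 + α 2 * α 3) * X ^ 2
      - C (α 0 * α 1 * α 2 + α 0 * α 1 * α 3 + α 0 * α 2 * α 3 + α 1 * α 2 * α 3) * X ^ 3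
      + C (α 0 * α 1 * α 2 * α 3) * X ^ 4 := by
  simp only [Fin.prod_univ_four, map_add, map_mul]
  ring

theorem coeff_one_prod_one_sub_C_mul_X_fin_four {R : Type*} [CommRing R] (α : Fin 4 → R) :
    (∏ i, (1 - C (α i) * X)).coeff 1 = -(α 0 + α 1 + α 2 + α 3) := by
  simp [prod_one_sub_C_mul_X_fin_four, coeff_one, -map_mul, -map_add]

theorem coeff_two_prod_one_sub_C_mul_X_fin_four {R : Type*} [CommRing R] (α : Fin 4 → R) :
    (∏ i, (1 - C (α i) * X)).coeff 2
      = α 0 * α 1 + α 0 * α 2 + α 0 * α 3 + α 1 * α 2 + α 1 * α 3 + α 2 * α 3 := by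
  simp [prod_one_sub_C_mul_X_fin_four, coeff_one, -map_mul, -map_add]

theorem Monotone.apply_add_apply_rev_eq {n : ℕ} {s : Fin n → ℝ} (hs : Monotone s) {c : ℝ}
    (h : Finset.univ.val.map (fun i => c - s i) = Finset.univ.val.map s) (i : Fin n) :
    s i + s i.rev = c := by
  have hsorted : Monotone fun i : Fin n => c - s i.rev := fun i j hij => by
    have := hs (Fin.rev_le_rev.2 hij)
    linarith
  have hperm : (List.ofFn fun i : Fin n => c - s i.rev).Perm (List.ofFn s) := by
    refine (Equiv.Perm.ofFn_comp_perm Fin.revPerm (fun i => c - s i)).trans ?_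
    rw [← Multiset.coe_eq_coe, ← Fin.univ_val_map, ← Fin.univ_val_map, h]
  have := congrFun (List.ofFn_injective (hperm.eq_of_sortedLE hsorted.sortedLE_ofFn
    hs.sortedLE_ofFn)) i
  linarith

namespace AddValuation

variable {K : Type*} [Field K]

noncomputable def ofTopIff (f : K → WithTop ℝ) (h0 : ∀ x, f x = ⊤ ↔ x = 0)
    (hmul : ∀ x y, f (x * y) = f x + f y) (hadd : ∀ x y, min (f x) (f y) ≤ f (x + y)) :
    AddValuation K (WithTop ℝ) :=
  have h1 : f 1 = (0 : ℝ) := by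
    obtain ⟨r, hr⟩ := WithTop.ne_top_iff_exists.1 (mt (h0 1).1 one_ne_zero)
    have h : ((r + r : ℝ) : WithTop ℝ) = r := by rw [WithTop.coe_add, hr, ← hmul, mul_one]
    rw [← hr, show r = 0 by linarith [WithTop.coe_injective h]]
  AddValuation.of f ((h0 0).2 rfl) h1 hadd hmul

theorem one_sub_slopes_eq_slopes {ι : Type*} [Fintype ι] (w : AddValuation K (WithTop ℝ))
    {q : K} (hq : w q = ((1 : ℝ) : WithTop ℝ)) {α : ι → K} {s : ι → ℝ}
    (hs : ∀ i, w (α i) = s i)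
    (hsym : (Finset.univ.val.map α).map (fun x => q / x) = Finset.univ.val.map α) :
    Finset.univ.val.map (fun i => 1 - s i) = Finset.univ.val.map s := by
  apply Multiset.map_injective WithTop.coe_injective
  simpa [Multiset.map_map, Function.comp_def, hs, hq] using congrArg (Multiset.map w) hsym

variable (w : AddValuation K (WithTop ℝ)) {α : Fin 4 → K} {s : Fin 4 → ℝ} {b : ℕ → K}

section Coefficients

variable (hb : ∀ n, b n = (∏ i, (1 - C (α i) * X)).coeff n)
include hb

theorem val_coeff_zero : w (b 0) = ((0 : ℝ) : WithTop ℝ) := by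
  simp [hb, prod_one_sub_C_mul_X_fin_four, coeff_one]

variable (hs : ∀ i, w (α i) = s i)
include hs

theorem val_coeff_four : w (b 4) = ((s 0 + s 1 + s 2 + s 3 : ℝ) : WithTop ℝ) := by
  simp [hb, prod_one_sub_C_mul_X_fin_four, coeff_one, -_root_.map_mul, -_root_.map_add, hs]

variable (hmono : Monotone s)
include hmono

/-- The Newton polygon of `∏ (1 - αᵢ T)` lies above the polygon with the sorted slopes `s`. -/
theorem partialSum_le_val_coeff (k : ℕ) (hk : k ≤ 4) :
    ((((List.ofFn s).take k).sum : ℝ) : WithTop ℝ) ≤ w (b k) := by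
  have h01 := hmono (by decide : (0 : Fin 4) ≤ 1)
  have h12 := hmono (by decide : (1 : Fin 4) ≤ 2)
  have h23 := hmono (by decide : (2 : Fin 4) ≤ 3)
  interval_cases k
  · simp [val_coeff_zero w hb]
  all_goals
    simp [hb, prod_one_sub_C_mul_X_fin_four, coeff_one, List.ofFn_succ, -_root_.map_mul,
      -_root_.map_add]
    repeat' apply w.map_le_add
    all_goals simp only [w.map_neg, w.map_mul, hs, ← WithTop.coe_add, WithTop.coe_le_coe]; linarith

theorem val_coeff_one_of_lt (h01 : s 0 < s 1) : w (b 1) = ((s 0 : ℝ) : WithTop ℝ) := by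
  have hrest : ((s 1 : ℝ) : WithTop ℝ) ≤ w (α 1 + α 2 + α 3) := by
    repeat' apply w.map_le_add
    all_goals simp only [hs, WithTop.coe_le_coe]
    all_goals linarith [hmono (by decide : (1 : Fin 4) ≤ 2), hmono (by decide : (2 : Fin 4) ≤ 3)]
  rw [hb, coeff_one_prod_one_sub_C_mul_X_fin_four,
    show α 0 + α 1 + α 2 + α 3 = α 0 + (α 1 + α 2 + α 3) by ring, w.map_neg,
    w.map_add_eq_of_lt_left (by rw [hs]; exact (WithTop.coe_lt_coe.2 h01).trans_le hrest), hs]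

theorem val_coeff_two_of_lt (h12 : s 1 < s 2) : w (b 2) = ((s 0 + s 1 : ℝ) : WithTop ℝ) := by
  have hrest : ((s 0 + s 2 : ℝ) : WithTop ℝ)
      ≤ w (α 0 * α 2 + α 0 * α 3 + α 1 * α 2 + α 1 * α 3 + α 2 * α 3) := by
    repeat' apply w.map_le_add
    all_goals simp only [w.map_mul, hs, ← WithTop.coe_add, WithTop.coe_le_coe]
    all_goals linarith [hmono (by decide : (0 : Fin 4) ≤ 1), hmono (by decide : (2 : Fin 4) ≤ 3)]
  have hlt : w (α 0 * α 1) < w (α 0 * α 2 + α 0 * α 3 + α 1 * α 2 + α 1 * α 3 + α 2 * α 3) := by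
    rw [w.map_mul, hs, hs, ← WithTop.coe_add]
    exact (WithTop.coe_lt_coe.2 (by linarith)).trans_le hrest
  rw [hb, coeff_two_prod_one_sub_C_mul_X_fin_four, add_assoc, add_assoc, add_assoc, add_assoc,
    w.map_add_eq_of_lt_left (by simpa only [add_assoc] using hlt), w.map_mul, hs, hs,
    WithTop.coe_add]

theorem isNPVertex_of_supporting_slopes_partialSum {n : ℕ} {P m₁ m₂ : ℝ} (hn : n ≤ 4)
    (hP : w (b n) = P) (hm : m₁ < m₂)
    (h₁ : ∀ k ≤ 4, m₁ * (k - n) + P ≤ ((List.ofFn s).take k).sum)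
    (h₂ : ∀ k ≤ 4, m₂ * (k - n) + P ≤ ((List.ofFn s).take k).sum) :
    IsNPVertex 4 (fun k => w (b k)) n ∧ npVal 4 (fun k => w (b k)) n = P :=
  have hlow := partialSum_le_val_coeff w hb hs hmono
  isNPVertex_of_supporting_slopes (val_coeff_zero w hb) (val_coeff_four w hb hs) hn hP hm
    (fun k hk => (WithTop.coe_le_coe.2 (h₁ k hk)).trans (hlow k hk))
    (fun k hk => (WithTop.coe_le_coe.2 (h₂ k hk)).trans (hlow k hk))

end Coefficients

theorem slopes_eq_half_of_monotone (hs : ∀ i, w (α i) = s i)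
    (hb : ∀ n, b n = (∏ i, (1 - C (α i) * X)).coeff n) (hmono : Monotone s)
    (hsym : Finset.univ.val.map (fun i => 1 - s i) = Finset.univ.val.map s)
    (hvert : ∀ n : ℕ, IsNPVertex 4 (fun k => w (b k)) n →
      ∃ z : ℤ, npVal 4 (fun k => w (b k)) (n : ℝ) = (z : ℝ) / 6)
    (hb1 : ((5 / 12 : ℝ) : WithTop ℝ) < w (b 1)) (hb2 : ((5 / 6 : ℝ) : WithTop ℝ) < w (b 2)) :
    ∀ i, s i = 1 / 2 := by
  have h03 : s 0 + s 3 = 1 := hmono.apply_add_apply_rev_eq hsym 0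
  suffices s 0 = 1 / 2 by
    intro i
    linarith [hmono (Fin.zero_le i), hmono (show i ≤ 3 from Fin.le_last i)]
  have h12 : s 1 + s 2 = 1 := hmono.apply_add_apply_rev_eq hsym 1
  have hs01 := hmono (by decide : (0 : Fin 4) ≤ 1)
  have hs12 := hmono (by decide : (1 : Fin 4) ≤ 2)
  have hs23 := hmono (by decide : (2 : Fin 4) ≤ 3)
  by_contra hne
  have hlt : s 0 < 1 / 2 := lt_of_le_of_ne (by linarith) hne
  rcases hs01.lt_or_eq with hs01 | hs01
  · have hP := val_coeff_one_of_lt w hb hs hmono hs01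
    obtain ⟨hv, hval⟩ := isNPVertex_of_supporting_slopes_partialSum w hb hs hmono
      (by norm_num) hP hs01
      (fun k hk => by interval_cases k <;> simp [List.ofFn_succ] <;> linarith)
      (fun k hk => by interval_cases k <;> simp [List.ofFn_succ] <;> linarith)
    obtain ⟨z, hz⟩ := hvert 1 hv
    rw [hval] at hz
    rw [hP, WithTop.coe_lt_coe] at hb1
    have h₅ : (5 : ℤ) < 2 * z := by exact_mod_cast (by linarith : (5 : ℝ) < 2 * z)
    have h₆ : 2 * z < (6 : ℤ) := by exact_mod_cast (by linarith : 2 * (z : ℝ) < 6)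
    omega
  rcases hs12.lt_or_eq with hs12 | hs12
  · have hP := val_coeff_two_of_lt w hb hs hmono hs12
    obtain ⟨hv, hval⟩ := isNPVertex_of_supporting_slopes_partialSum w hb hs hmono
      (by norm_num) hP hs12
      (fun k hk => by interval_cases k <;> simp [List.ofFn_succ] <;> linarith)
      (fun k hk => by interval_cases k <;> simp [List.ofFn_succ] <;> linarith)
    obtain ⟨z, hz⟩ := hvert 2 hv
    rw [hval] at hz
    rw [hP, WithTop.coe_lt_coe] at hb2
    have h₅ : (5 : ℤ) < z := by exact_mod_cast (by linarith : (5 : ℝ) < z)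
    have h₆ : z < (6 : ℤ) := by exact_mod_cast (by linarith : (z : ℝ) < 6)
    omega
  linarith

theorem val_eq_half_of_newtonPolygon {q : K} (hq : w q = ((1 : ℝ) : WithTop ℝ))
    (hα : ∀ i, α i ≠ 0) (hb : ∀ n, b n = (∏ i, (1 - C (α i) * X)).coeff n)
    (hsym : (Finset.univ.val.map α).map (fun x => q / x) = Finset.univ.val.map α)
    (hvert : ∀ n : ℕ, IsNPVertex 4 (fun k => w (b k)) n →
      ∃ z : ℤ, npVal 4 (fun k => w (b k)) (n : ℝ) = (z : ℝ) / 6)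
    (hb1 : ((5 / 12 : ℝ) : WithTop ℝ) < w (b 1)) (hb2 : ((5 / 6 : ℝ) : WithTop ℝ) < w (b 2)) :
    ∀ i, w (α i) = ((1 / 2 : ℝ) : WithTop ℝ) := by
  choose s hs using fun i => WithTop.ne_top_iff_exists.1 ((w.ne_top_iff).2 (hα i))
  set σ := Tuple.sort s
  have hmono : Monotone (s ∘ σ) := Tuple.monotone_sort s
  have hsσ : ∀ i, w ((α ∘ σ) i) = (s ∘ σ) i := fun i => (hs _).symm
  have hbσ : ∀ n, b n = (∏ i, (1 - C ((α ∘ σ) i) * X)).coeff n := fun n => by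
    rw [hb, ← Equiv.prod_comp σ]
    rfl
  have hασ : Finset.univ.val.map (α ∘ σ) = Finset.univ.val.map α := by
    rw [← Multiset.map_map, Multiset.map_univ_val_equiv]
  intro i
  obtain ⟨j, rfl⟩ := σ.surjective i
  rw [← hs]
  exact congrArg _ (slopes_eq_half_of_monotone w hsσ hbσ hmono
    (one_sub_slopes_eq_slopes w hq hsσ (hασ ▸ hsym)) hvert hb1 hb2 j)

end AddValuation

theorem newton_polygon_forces_supersingular_seven
    (v : AlgebraicClosure ℚ_[7] → WithTop ℝ)
    (hv0 : ∀ x, v x = ⊤ ↔ x = 0)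
    (hv_mul : ∀ x y, v (x * y) = v x + v y)
    (hv_add : ∀ x y, min (v x) (v y) ≤ v (x + y))
    (hv_ext : ∀ x : ℚ_[7], x ≠ 0 →
      v (algebraMap ℚ_[7] (AlgebraicClosure ℚ_[7]) x) = ((x.valuation : ℝ) : WithTop ℝ))
    (a : ℕ) (ha : 0 < a)
    (α : Fin 4 → AlgebraicClosure ℚ_[7]) (hα : ∀ i, α i ≠ 0)
    -- `ord_q := (1/a)·ord_7`
    (ordq : AlgebraicClosure ℚ_[7] → WithTop ℝ)
    (hordq : ∀ x, ordq x = WithTop.map (fun t => t / (a : ℝ)) (v x))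
    -- the coefficients of `P(T) = ∏ᵢ (1 − αᵢ T)`
    (b : ℕ → AlgebraicClosure ℚ_[7])
    (hb : ∀ n, b n =
      (∏ i, (1 - Polynomial.C (α i) * Polynomial.X)).coeff n)
    -- (i) the multiset of the reciprocal roots is stable under `α ↦ q/α`
    (hsym : (Finset.univ.val.map α).map
        (fun x => ((7 : AlgebraicClosure ℚ_[7]) ^ a) / x) = Finset.univ.val.map α)
    -- (ii) every vertex of the Newton polygon has ordinate a multiple of 1/6
    (hvert : ∀ n : ℕ, IsNPVertex 4 (fun k => ordq (b k)) n →
      ∃ z : ℤ, npVal 4 (fun k => ordq (b k)) (n : ℝ) = (z : ℝ) / 6)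
    -- (iii)
    (hb1 : ((5 / 12 : ℝ) : WithTop ℝ) < ordq (b 1))
    (hb2 : ((5 / 6 : ℝ) : WithTop ℝ) < ordq (b 2)) :
    ∀ i, ordq (α i) = ((1 / 2 : ℝ) : WithTop ℝ) := by
  let w := (AddValuation.ofTopIff v hv0 hv_mul hv_add).map
    (AddMonoidHom.withTopMap (AddMonoidHom.mulRight (a : ℝ)⁻¹)) rfl
    (WithTop.monotone_map_iff.2 fun x y h => mul_le_mul_of_nonneg_right h (by positivity))
  have hw : ⇑w = ordq := funext fun x => by rw [hordq]; simp only [div_eq_mul_inv]; rfl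
  have hv7 : v 7 = ((1 : ℝ) : WithTop ℝ) := by
    rw [← map_ofNat (algebraMap ℚ_[7] _), hv_ext 7 (by norm_num),
      show (7 : ℚ_[7]) = ((7 : ℕ) : ℚ_[7]) by norm_num, Padic.valuation_p]
    simp
  have hq : w (7 ^ a) = ((1 : ℝ) : WithTop ℝ) := by
    rw [AddValuation.map_pow, hw, hordq, hv7]
    simp [← WithTop.coe_nsmul, nsmul_eq_mul, mul_inv_cancel₀ (by positivity : (a : ℝ) ≠ 0)]
  rw [← hw] at hvert hb1 hb2 ⊢
  exact w.val_eq_half_of_newtonPolygon hq hα hb hsym hvert hb1 hb2
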